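/- arXiv:1107.3879 — 3 statements merged into one kernel-verified Lean document; each statement's English description precedes it below -/
import Mathlib

section
/- Let d be a finite index set with |d| ≥ 2 and let c = (c_i)_{i∈d} with each c_i ∈ (0,1) and ∑_{i∈d} c_i > 1. Then the equation 1 − x = ∏_{i∈d} (1 − c_i x) has a unique solution x in the open interval (0,1). -/
/-!
Put `g x = ∏ i ∈ d, (1 - c i * x) + x`, so that the equation reads `g x = 1`. On `[0, 1]` every
factor `1 - c i * x` is nonnegative, decreasing and affine, hence the product and `g` are convex.
Moreover `g 0 = 1`, `g' 0 = 1 - ∑ c i < 0` and `g 1 > 1`: the function dips below `1` right after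
`0` and ends above `1`, so it crosses `1` in `(0, 1)` by the intermediate value theorem. It cannot
cross twice, because a convex function that has risen from below `1` to `1` is strictly
increasing from then on.
-/

open Set Filter Topology

theorem Finset.antitoneOn_prod_of_nonneg {α β ι : Type*} [Preorder α] [CommSemiring β]
    [PartialOrder β] [IsOrderedRing β] {s : Set α} {f : ι → α → β}
    (t : Finset ι) (hanti : ∀ i ∈ t, AntitoneOn (f i) s)
    (hnonneg : ∀ i ∈ t, ∀ x ∈ s, 0 ≤ f i x) : AntitoneOn (∏ i ∈ t, f i) s := by
  classical
  induction t using Finset.induction with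
  | empty => exact fun _ _ _ _ _ ↦ le_rfl
  | insert i t hit ih =>
    rw [Finset.prod_insert hit]
    simp only [Finset.forall_mem_insert] at hanti hnonneg
    refine fun x hx y hy hxy ↦ mul_le_mul (hanti.1 hx hy hxy) (ih hanti.2 hnonneg.2 hx hy hxy)
      ?_ (hnonneg.1 x hx)
    rw [Finset.prod_apply]
    exact Finset.prod_nonneg fun j hj ↦ hnonneg.2 j hj y hy

theorem Finset.convexOn_prod_of_antitoneOn {𝕜 G ι : Type*} [CommRing 𝕜] [LinearOrder 𝕜]
    [IsStrictOrderedRing 𝕜] [AddCommGroup G] [LinearOrder G] [Module 𝕜 G] {s : Set G}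
    {f : ι → G → 𝕜} (t : Finset ι) (hconv : ∀ i ∈ t, ConvexOn 𝕜 s (f i))
    (hanti : ∀ i ∈ t, AntitoneOn (f i) s) (hnonneg : ∀ i ∈ t, ∀ x ∈ s, 0 ≤ f i x)
    (hs : Convex 𝕜 s) : ConvexOn 𝕜 s (∏ i ∈ t, f i) := by
  classical
  induction t using Finset.induction with
  | empty => exact convexOn_const 1 hs
  | insert i t hit ih =>
    rw [Finset.prod_insert hit]
    simp only [Finset.forall_mem_insert] at hconv hanti hnonneg
    refine hconv.1.mul (ih hconv.2 hanti.2 hnonneg.2) (fun x hx ↦ hnonneg.1 x hx)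
      (fun x hx ↦ ?_) (hanti.1.monovaryOn (t.antitoneOn_prod_of_nonneg hanti.2 hnonneg.2))
    rw [Finset.prod_apply]
    exact Finset.prod_nonneg fun j hj ↦ hnonneg.2 j hj x hx

theorem HasDerivWithinAt.eventually_nhdsGT_lt {f : ℝ → ℝ} {f' a : ℝ}
    (hf : HasDerivWithinAt f f' (Ioi a) a) (hf' : f' < 0) : ∀ᶠ x in 𝓝[>] a, f x < f a := by
  filter_upwards [hf.limsup_slope_le' (lt_irrefl a) hf', self_mem_nhdsWithin]
    with x hslope (hax : a < x)
  rw [slope_def_field, div_neg_iff] at hslope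
  rcases hslope with ⟨-, hneg⟩ | ⟨hpos, -⟩ <;> linarith

theorem ConvexOn.existsUnique_mem_Ioo_eq {f : ℝ → ℝ} {a b v : ℝ} (hab : a < b)
    (hconv : ConvexOn ℝ (Icc a b) f) (hcont : ContinuousOn f (Icc a b))
    (hdip : ∃ᶠ x in 𝓝[>] a, f x < v) (hb : v < f b) :
    ∃! x, x ∈ Ioo a b ∧ f x = v := by
  have dip_before : ∀ y ∈ Ioc a b, ∃ x ∈ Ioo a y, f x < v := fun y hy ↦
    (hdip.and_eventually (Ioo_mem_nhdsGT hy.1)).exists.imp fun x hx ↦ ⟨hx.2, hx.1⟩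
  obtain ⟨x₀, hx₀, hfx₀⟩ := dip_before b ⟨hab, le_rfl⟩
  obtain ⟨x, hx, hfx⟩ := intermediate_value_Ioo hx₀.2.le
    (hcont.mono (Icc_subset_Icc hx₀.1.le le_rfl)) ⟨hfx₀, hb⟩
  have hxI : x ∈ Ioo a b := ⟨hx₀.1.trans hx.1, hx.2⟩
  refine ⟨x, ⟨hxI, hfx⟩, ?_⟩
  have no_larger_root : ∀ y ∈ Ioo a b, f y = v → ∀ z ∈ Ioo a b, y < z → f z ≠ v := by
    intro y hy hfy z hz hyz
    obtain ⟨x₁, hx₁, hfx₁⟩ := dip_before y ⟨hy.1, hy.2.le⟩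
    have hmono := hconv.strictMonoOn (Ioo_subset_Icc_self ⟨hx₁.1, hx₁.2.trans hy.2⟩) hx₁.2
      (hfy ▸ hfx₁)
    have hfyz : f y < f z :=
      hmono ⟨Ioo_subset_Icc_self hy, le_refl y⟩ ⟨Ioo_subset_Icc_self hz, hyz.le⟩ hyz
    exact (hfy ▸ hfyz).ne'
  rintro y ⟨hy, hfy⟩
  rcases lt_trichotomy y x with hyx | rfl | hxy
  · exact absurd hfx (no_larger_root y hy hfy x hxI hyx)
  · rfl
  · exact absurd hfy (no_larger_root x hxI hfx y hy hxy)

section Minc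

variable {ι : Type*} (d : Finset ι) (c : ι → ℝ)

noncomputable def mincFun (x : ℝ) : ℝ := ∏ i ∈ d, (1 - c i * x) + x

theorem mincFun_zero : mincFun d c 0 = 1 := by
  simp [mincFun]

theorem mincFun_eq_one_iff {x : ℝ} : mincFun d c x = 1 ↔ 1 - x = ∏ i ∈ d, (1 - c i * x) := by
  unfold mincFun
  constructor <;> intro h <;> linarith

theorem continuous_mincFun : Continuous (mincFun d c) := by
  unfold mincFun
  fun_prop

theorem hasDerivAt_mincFun_zero : HasDerivAt (mincFun d c) (1 - ∑ i ∈ d, c i) 0 := by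
  classical
  have hfactor : ∀ i ∈ d, HasDerivAt (fun x ↦ 1 - c i * x) (-c i) 0 := fun i _ ↦ by
    simpa using ((hasDerivAt_id (0 : ℝ)).const_mul (c i)).const_sub 1
  refine ((HasDerivAt.fun_finsetProd hfactor).add (hasDerivAt_id' 0)).congr_deriv ?_
  simp [sub_eq_neg_add]

theorem one_lt_mincFun_one (hc : ∀ i ∈ d, c i < 1) : 1 < mincFun d c 1 := by
  have : 0 < ∏ i ∈ d, (1 - c i * 1) :=
    Finset.prod_pos fun i hi ↦ by linarith [hc i hi]
  unfold mincFun
  linarith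

theorem convexOn_mincFun (hc : ∀ i ∈ d, c i ∈ Icc 0 1) : ConvexOn ℝ (Icc 0 1) (mincFun d c) := by
  have hprod : ConvexOn ℝ (Icc 0 1) (∏ i ∈ d, fun x : ℝ ↦ 1 - c i * x) := by
    refine d.convexOn_prod_of_antitoneOn (fun i hi ↦ ?_) (fun i hi ↦ ?_) (fun i hi x hx ↦ ?_)
      (convex_Icc 0 1)
    · exact (convexOn_const 1 (convex_Icc 0 1)).sub
        ((concaveOn_id (convex_Icc 0 1)).smul (hc i hi).1)
    · exact fun x _ y _ hxy ↦ by nlinarith [(hc i hi).1]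
    · nlinarith [(hc i hi).2, hx.1, hx.2]
  rw [Finset.prod_fn] at hprod
  exact hprod.add (convexOn_id (convex_Icc 0 1))

end Minc

theorem minc_unique_solution_general {ι : Type*} (d : Finset ι) (c : ι → ℝ)
    (hc : ∀ i ∈ d, c i ∈ Set.Ioo (0 : ℝ) 1)
    (hsum : 1 < ∑ i ∈ d, c i) :
    ∃! x : ℝ, x ∈ Set.Ioo (0 : ℝ) 1 ∧ 1 - x = ∏ i ∈ d, (1 - c i * x) := by
  have hdip : ∃ᶠ x in 𝓝[>] 0, mincFun d c x < 1 := by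
    have hdecr := (hasDerivAt_mincFun_zero d c).hasDerivWithinAt.eventually_nhdsGT_lt
      (sub_neg.2 hsum)
    simpa only [mincFun_zero] using hdecr.frequently
  simpa only [mincFun_eq_one_iff] using
    (convexOn_mincFun d c fun i hi ↦ Ioo_subset_Icc_self (hc i hi)).existsUnique_mem_Ioo_eq
      zero_lt_one (continuous_mincFun d c).continuousOn hdip
      (one_lt_mincFun_one d c fun i hi ↦ (hc i hi).2)

/-- MINC Lemma 1: the likelihood equation `1 - x = ∏ (1 - c i * x)` has a unique
solution in `(0,1)` when each `c i ∈ (0,1)` and `∑ c i > 1`. -/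
theorem minc_unique_solution {ι : Type*} (d : Finset ι) (c : ι → ℝ)
    (hcard : 2 ≤ d.card)
    (hc : ∀ i ∈ d, c i ∈ Set.Ioo (0 : ℝ) 1)
    (hsum : 1 < ∑ i ∈ d, c i) :
    ∃! x : ℝ, x ∈ Set.Ioo (0 : ℝ) 1 ∧ 1 - x = ∏ i ∈ d, (1 - c i * x) :=
  minc_unique_solution_general d c hc hsum
end

section
/- Let h(x) = (1 − x) − ∏_{i∈d}(1 − c_i x) with c_i ∈ (0,1) for all i in the finite set d, |d| ≥ 2. Then h(0) = 0 and h'(0) = (∑_{i∈d} c_i) − 1. Consequently, if ∑_{i∈d} c_i = 1 then 0 is a root of h of multiplicity at least 2, and h has no root in (0,1) (h(x) < 0 for all x ∈ (0,1)). -/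
/-!
At `0` every factor `1 - c i * x` equals `1`, so the product rule gives `h'(0) = ∑ c i - 1`.
When `∑ c i = 1` and `x ∈ (0,1)`, the numbers `a i = c i * x` lie in `(0,1)` and sum to `x`, so
`h(x) < 0` is exactly the strict Weierstrass product inequality `1 - ∑ a i < ∏ (1 - a i)`, which
holds for at least two factors.
-/

open Finset

section WeierstrassProduct

variable {ι : Type*} (a : ι → ℝ)

theorem one_sub_sum_le_prod_one_sub (s : Finset ι) (h0 : ∀ i ∈ s, 0 ≤ a i)
    (h1 : ∀ i ∈ s, a i ≤ 1) :
    1 - ∑ i ∈ s, a i ≤ ∏ i ∈ s, (1 - a i) := by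
  classical
  induction s using Finset.induction with
  | empty => simp
  | @insert j s hj ih =>
    rw [sum_insert hj, prod_insert hj]
    have ih := ih (fun i hi => h0 i (mem_insert_of_mem hi))
      (fun i hi => h1 i (mem_insert_of_mem hi))
    have hsum : 0 ≤ ∑ i ∈ s, a i := sum_nonneg fun i hi => h0 i (mem_insert_of_mem hi)
    nlinarith [h0 j (mem_insert_self j s), h1 j (mem_insert_self j s)]

theorem one_sub_sum_lt_prod_one_sub {s : Finset ι} (hs : 1 < s.card) (h0 : ∀ i ∈ s, 0 < a i)
    (h1 : ∀ i ∈ s, a i ≤ 1) :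
    1 - ∑ i ∈ s, a i < ∏ i ∈ s, (1 - a i) := by
  classical
  obtain ⟨j, hj⟩ := card_pos.mp (zero_lt_one.trans hs)
  have hrest : (s.erase j).Nonempty := card_pos.mp (by rw [card_erase_of_mem hj]; omega)
  have hle := one_sub_sum_le_prod_one_sub a (s.erase j)
    (fun i hi => (h0 i (mem_of_mem_erase hi)).le) (fun i hi => h1 i (mem_of_mem_erase hi))
  -- the cross term `a j * ∑_{i ≠ j} a i` dropped by the weak inequality is positive
  have hsum : 0 < ∑ i ∈ s.erase j, a i := sum_pos (fun i hi => h0 i (mem_of_mem_erase hi)) hrest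
  rw [← insert_erase hj, sum_insert (notMem_erase j s), prod_insert (notMem_erase j s)]
  nlinarith [h0 j hj, h1 j hj]

end WeierstrassProduct

theorem hasDerivAt_prod_one_sub_mul_zero {ι : Type*} (d : Finset ι) (c : ι → ℝ) :
    HasDerivAt (fun x : ℝ => ∏ i ∈ d, (1 - c i * x)) (-∑ i ∈ d, c i) 0 := by
  classical
  have hfactor : ∀ i ∈ d, HasDerivAt (fun x : ℝ => 1 - c i * x) (-c i) 0 := fun i _ => by
    simpa using ((hasDerivAt_id (0 : ℝ)).const_mul (c i)).const_sub 1
  simpa [sum_neg_distrib] using HasDerivAt.fun_finsetProd hfactor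

/-- No-solution phenomenon: `h(0) = 0`, `h'(0) = ∑ c i − 1`; if `∑ c i = 1` then `0`
is a root of multiplicity at least two and `h < 0` on `(0,1)`. -/
theorem no_solution_complete_exclusion {ι : Type*} (d : Finset ι) (c : ι → ℝ)
    (hcard : 2 ≤ d.card)
    (hc : ∀ i ∈ d, c i ∈ Set.Ioo (0 : ℝ) 1) :
    (fun x : ℝ => (1 - x) - ∏ i ∈ d, (1 - c i * x)) 0 = 0 ∧
    deriv (fun x : ℝ => (1 - x) - ∏ i ∈ d, (1 - c i * x)) 0 = (∑ i ∈ d, c i) - 1 ∧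
    ((∑ i ∈ d, c i) = 1 →
      deriv (fun x : ℝ => (1 - x) - ∏ i ∈ d, (1 - c i * x)) 0 = 0 ∧
      ∀ x ∈ Set.Ioo (0 : ℝ) 1, (1 - x) - ∏ i ∈ d, (1 - c i * x) < 0) := by
  have hderiv :
      deriv (fun x : ℝ => (1 - x) - ∏ i ∈ d, (1 - c i * x)) 0 = (∑ i ∈ d, c i) - 1 := by
    rw [(((hasDerivAt_id' (0 : ℝ)).const_sub 1).fun_sub
      (hasDerivAt_prod_one_sub_mul_zero d c)).deriv]
    ring
  refine ⟨by simp, hderiv, fun hsum => ⟨by rw [hderiv, hsum, sub_self], fun x hx => ?_⟩⟩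
  have hweier := one_sub_sum_lt_prod_one_sub (fun i => c i * x) hcard
    (fun i hi => mul_pos (hc i hi).1 hx.1)
    (fun i hi => mul_le_one₀ (hc i hi).2.le hx.1.le hx.2.le)
  rw [← sum_mul, hsum, one_mul] at hweier
  linarith
end

section
/- Let S be a finite set of sources all observing a common subtree, and suppose the per-source likelihood equations are 1 − x_s = ∏_{j∈d}(1 − c_j x_s) for every s ∈ S with the same coefficients c_j ∈ (0,1), ∑ c_j > 1. If x_s, x_t ∈ (0,1) are solutions for sources s, t, then x_s = x_t; moreover, if x_s = γ_s/A_s and x_t = γ_t/A_t for positive reals γ_s, γ_t, A_s, A_t, then A_t = (γ_t/γ_s)·A_s. -/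
/-!
The function `x ↦ ∏ j ∈ d, (1 - c j * x)` is strictly convex on `[0, 1]` as soon as `d` has two
elements, which `∑ c j > 1` forces when every `c j < 1`. Hence its graph meets the line `1 - x`,
which it already meets at `x = 0`, at most once more. Concretely, for `0 < a < b` and `t = a / b`
each factor `1 - c j * a` is the interpolation `1 - t + t * (1 - c j * b)`, and the strict chord
inequality for such interpolations turns a root at `b` into `∏ j ∈ d, (1 - c j * a) < 1 - a`.
-/

open Finset

lemma one_sub_add_mul_mul_one_sub_add_mul (t a b : ℝ) :
    (1 - t + t * a) * (1 - t + t * b) = 1 - t + t * (a * b) - t * (1 - t) * (1 - a) * (1 - b) := by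
  ring

section ChordInequality

variable {ι : Type*} {u : ι → ℝ} {t : ℝ}

lemma prod_one_sub_add_mul_le (d : Finset ι) (hu : ∀ j ∈ d, u j ∈ Set.Icc (0 : ℝ) 1)
    (ht : t ∈ Set.Icc (0 : ℝ) 1) :
    ∏ j ∈ d, (1 - t + t * u j) ≤ 1 - t + t * ∏ j ∈ d, u j := by
  classical
  obtain ⟨ht0, ht1⟩ := ht
  induction d using Finset.induction_on with
  | empty => simp
  | insert i s hi ih =>
    have hs : ∀ j ∈ s, u j ∈ Set.Icc (0 : ℝ) 1 := fun j hj ↦ hu j (mem_insert_of_mem hj)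
    obtain ⟨hui0, hui1⟩ := hu i (mem_insert_self i s)
    have hU1 : ∏ j ∈ s, u j ≤ 1 := prod_le_one (fun j hj ↦ (hs j hj).1) (fun j hj ↦ (hs j hj).2)
    rw [prod_insert hi, prod_insert hi]
    calc (1 - t + t * u i) * ∏ j ∈ s, (1 - t + t * u j)
        ≤ (1 - t + t * u i) * (1 - t + t * ∏ j ∈ s, u j) :=
          mul_le_mul_of_nonneg_left (ih hs) (by nlinarith)
      _ ≤ 1 - t + t * (u i * ∏ j ∈ s, u j) := by
          rw [one_sub_add_mul_mul_one_sub_add_mul]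
          have : 0 ≤ t * (1 - t) * (1 - u i) * (1 - ∏ j ∈ s, u j) := by
            apply mul_nonneg (mul_nonneg (mul_nonneg _ _) _) _ <;> linarith
          linarith

lemma prod_one_sub_add_mul_lt (d : Finset ι) (hd : 1 < #d) (hu : ∀ j ∈ d, u j ∈ Set.Ioo (0 : ℝ) 1)
    (ht : t ∈ Set.Ioo (0 : ℝ) 1) :
    ∏ j ∈ d, (1 - t + t * u j) < 1 - t + t * ∏ j ∈ d, u j := by
  classical
  obtain ⟨ht0, ht1⟩ := ht
  obtain ⟨i, hi⟩ : d.Nonempty := card_pos.mp (by omega)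
  set s := d.erase i
  have hs_ne : s.Nonempty := card_pos.mp (by rw [card_erase_of_mem hi]; omega)
  have hs : ∀ j ∈ s, u j ∈ Set.Ioo (0 : ℝ) 1 := fun j hj ↦ hu j (mem_of_mem_erase hj)
  obtain ⟨hui0, hui1⟩ := hu i hi
  have hU1 : ∏ j ∈ s, u j < 1 := by
    simpa using prod_lt_prod_of_nonempty (fun j hj ↦ (hs j hj).1) (fun j hj ↦ (hs j hj).2) hs_ne
  rw [← insert_erase hi, prod_insert (notMem_erase i d), prod_insert (notMem_erase i d)]
  calc (1 - t + t * u i) * ∏ j ∈ s, (1 - t + t * u j)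
      ≤ (1 - t + t * u i) * (1 - t + t * ∏ j ∈ s, u j) :=
        mul_le_mul_of_nonneg_left
          (prod_one_sub_add_mul_le s (fun j hj ↦ Set.Ioo_subset_Icc_self (hs j hj))
            ⟨ht0.le, ht1.le⟩)
          (by nlinarith)
    _ < 1 - t + t * (u i * ∏ j ∈ s, u j) := by
        rw [one_sub_add_mul_mul_one_sub_add_mul]
        have : 0 < t * (1 - t) * (1 - u i) * (1 - ∏ j ∈ s, u j) := by
          apply mul_pos (mul_pos (mul_pos _ _) _) _ <;> linarith
        linarith

end ChordInequality

section LikelihoodEquation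

variable {ι : Type*} {d : Finset ι} {c : ι → ℝ}

lemma one_lt_card_of_one_lt_sum (hc : ∀ j ∈ d, c j ≤ 1) (hsum : 1 < ∑ j ∈ d, c j) : 1 < #d := by
  have : ∑ j ∈ d, c j ≤ #d := by simpa using sum_le_card_nsmul d c 1 hc
  exact_mod_cast hsum.trans_le this

lemma prod_one_sub_mul_lt_of_lt_root (hc : ∀ j ∈ d, c j ∈ Set.Ioo (0 : ℝ) 1) (hd : 1 < #d)
    {a b : ℝ} (ha : 0 < a) (hab : a < b) (hb : b ≤ 1) (hroot : 1 - b = ∏ j ∈ d, (1 - c j * b)) :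
    ∏ j ∈ d, (1 - c j * a) < 1 - a := by
  have hb0 : 0 < b := ha.trans hab
  set t := a / b
  have hta : t * b = a := div_mul_cancel₀ a hb0.ne'
  have ht : t ∈ Set.Ioo (0 : ℝ) 1 := ⟨div_pos ha hb0, (div_lt_one hb0).mpr hab⟩
  have hu : ∀ j ∈ d, 1 - c j * b ∈ Set.Ioo (0 : ℝ) 1 := fun j hj ↦ by
    obtain ⟨hc0, hc1⟩ := hc j hj
    constructor <;> nlinarith
  have hinterp : ∀ j ∈ d, 1 - t + t * (1 - c j * b) = 1 - c j * a := fun j _ ↦ by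
    rw [← hta]; ring
  calc ∏ j ∈ d, (1 - c j * a)
      = ∏ j ∈ d, (1 - t + t * (1 - c j * b)) := (prod_congr rfl hinterp).symm
    _ < 1 - t + t * ∏ j ∈ d, (1 - c j * b) := prod_one_sub_add_mul_lt d hd hu ht
    _ = 1 - a := by rw [← hroot, ← hta]; ring

lemma eq_of_likelihood_roots (hc : ∀ j ∈ d, c j ∈ Set.Ioo (0 : ℝ) 1)
    (hsum : 1 < ∑ j ∈ d, c j) {a b : ℝ} (ha : a ∈ Set.Ioo (0 : ℝ) 1) (hb : b ∈ Set.Ioo (0 : ℝ) 1)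
    (hea : 1 - a = ∏ j ∈ d, (1 - c j * a)) (heb : 1 - b = ∏ j ∈ d, (1 - c j * b)) : a = b := by
  have hd : 1 < #d := one_lt_card_of_one_lt_sum (fun j hj ↦ (hc j hj).2.le) hsum
  rcases lt_trichotomy a b with hab | hab | hab
  · exact absurd hea (prod_one_sub_mul_lt_of_lt_root hc hd ha.1 hab hb.2.le heb).ne'
  · exact hab
  · exact absurd heb (prod_one_sub_mul_lt_of_lt_root hc hd hb.1 hab ha.2.le hea).ne'

end LikelihoodEquation

/-- Multi-source proportionality: identical per-source likelihood equations give the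
same shared-subtree pass rate, and path pass rates are proportional to end-to-end
empirical pass rates. -/
theorem multisource_proportionality {ι : Type*} (d : Finset ι) (c : ι → ℝ)
    (hc : ∀ j ∈ d, c j ∈ Set.Ioo (0 : ℝ) 1)
    (hsum : 1 < ∑ j ∈ d, c j)
    (xs xt : ℝ) (hxs : xs ∈ Set.Ioo (0 : ℝ) 1) (hxt : xt ∈ Set.Ioo (0 : ℝ) 1)
    (hes : 1 - xs = ∏ j ∈ d, (1 - c j * xs))
    (het : 1 - xt = ∏ j ∈ d, (1 - c j * xt)) :
    xs = xt ∧
    ∀ γs γt As At : ℝ, 0 < γs → 0 < γt → 0 < As → 0 < At →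
      xs = γs / As → xt = γt / At → At = (γt / γs) * As := by
  have hx : xs = xt := eq_of_likelihood_roots hc hsum hxs hxt hes het
  refine ⟨hx, fun γs γt As At hγs _ hAs hAt hs ht ↦ ?_⟩
  have hratio : γs / As = γt / At := by rw [← hs, ← ht, hx]
  rw [div_eq_div_iff hAs.ne' hAt.ne'] at hratio
  field_simp
  linarith
end
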